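/- arXiv:1307.5594 — 2 statements merged into one kernel-verified Lean document; each statement's English description precedes it below -/
import Mathlib

section
/- Let A, B ∈ ℂ[z] be nonconstant polynomials and L₁, L₂ ∈ ℂ[z,1/z] be nonconstant Laurent polynomials with A ∘ L₁ = B ∘ L₂. Assume deg A = deg B. Then either (i) there exist complex numbers a ≠ 0 and b such that, for the degree-one polynomial w(z) = az + b, one has A = B ∘ w and L₂ = w ∘ L₁ = a·L₁ + b; or (ii) there exist an integer r ≥ 1, a nonzero complex number a, a root of unity ν, and degree-one polynomials w₁, w₂ ∈ ℂ[z] such that w₁ ∘ L₁ = a^r·z^r + a^{−r}·z^{−r} and w₂ ∘ L₂ = (aν)^r·z^r + (aν)^{−r}·z^{−r}. -/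
/-!
Embed Laurent polynomials into Laurent series and let `n = deg A = deg B`. Suppose `L₁` has a
pole of order `m > 0` at `0` (the point `∞` is treated by `z ↦ z⁻¹`). Completing `n`-th powers,
`A ∘ L₁ = x ^ n` and `B ∘ L₂ = y ^ n` up to order `-(n - 2) m`, with `x`, `y` affine in `L₁`,
`L₂`. In `x ^ n - y ^ n = ∏_{ζ ^ n = 1} (x - ζ y)` every factor has order `≥ -m` and at most
one has order `> -m`, so that one has order `≥ m`: for some `a` with `a ^ n = lc A / lc B`,
the coefficients of `L₂` and `a L₁` of index `k ≠ 0`, `k < m` agree.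

If `L₁` has a pole at only one of `0`, `∞`, or poles of different orders, or the two constants
`a` agree, these relations cover all nonconstant coefficients, so `L₂ = a L₁ + b`, and then
`A = B ∘ (a z + b)` because a nonconstant Laurent polynomial is transcendental. Otherwise both
poles have the same order `r`, the two relations force every coefficient of index `0 < |k| < r`
to vanish, and `L₁ = p z^{-r} + c + q z^r`. An affine change turns this into
`(b z)^r + (b z)^{-r}`; doing the same for `L₂`, the ratio `ν` of the two `b`'s has `ν ^ (2r)`
equal to the quotient of the two constants `a`, whose `n`-th power is `1`.
-/

open Polynomial LaurentPolynomial

namespace HahnSeries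

variable {Γ R : Type*} [AddCommMonoid Γ] [LinearOrder Γ] [IsOrderedCancelAddMonoid Γ]
  [CommRing R] [IsDomain R]

theorem order_prod {ι : Type*} (s : Finset ι) {f : ι → R⟦Γ⟧} (hf : ∀ i ∈ s, f i ≠ 0) :
    (∏ i ∈ s, f i).order = ∑ i ∈ s, (f i).order := by
  classical
  induction s using Finset.induction_on with
  | empty => simp
  | insert a s ha ih =>
    have hs : ∀ i ∈ s, f i ≠ 0 := fun i hi => hf i (Finset.mem_insert_of_mem hi)
    rw [Finset.prod_insert ha, Finset.sum_insert ha, order_mul (hf a (Finset.mem_insert_self a s))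
      (Finset.prod_ne_zero_iff.mpr hs), ih hs]

end HahnSeries

theorem IsPrimitiveRoot.pow_sub_pow_eq_prod_sub_algebraMap_mul {K A : Type*} [Field K]
    [CommRing A] [IsDomain A] [Algebra K A] {ζ : K} {n : ℕ} (hζ : IsPrimitiveRoot ζ n)
    (hn : 0 < n) (x y : A) :
    x ^ n - y ^ n = ∏ c ∈ nthRootsFinset n (1 : K), (x - algebraMap K A c * y) := by
  classical
  have hinj := (algebraMap K A).injective
  have hζA := hζ.map_of_injective hinj
  have himage : nthRootsFinset n (1 : A) = (nthRootsFinset n (1 : K)).image (algebraMap K A) :=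
    (Finset.eq_of_subset_of_card_le
      (fun _ hc => by
        obtain ⟨c, hc', rfl⟩ := Finset.mem_image.mp hc
        exact map_mem_nthRootsFinset_one hc' _)
      (by rw [Finset.card_image_of_injective _ hinj, hζ.card_nthRootsFinset,
        hζA.card_nthRootsFinset])).symm
  rw [hζA.pow_sub_pow_eq_prod_sub_mul x y hn, himage, Finset.prod_image fun a _ b _ h => hinj h]

theorem Polynomial.degree_sub_C_mul_X_add_C_pow_lt {K : Type*} [Field K] (Q : K[X])
    (hQ : (Q.natDegree : K) ≠ 0) :
    (Q - C Q.leadingCoeff *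
      (X + C (Q.nextCoeff / (Q.natDegree * Q.leadingCoeff))) ^ Q.natDegree).degree <
        ↑(Q.natDegree - 1) := by
  set n := Q.natDegree with hn
  have hn0 : 0 < n := Nat.pos_of_ne_zero fun h => hQ (by simp [h])
  have hlc : Q.leadingCoeff ≠ 0 := leadingCoeff_ne_zero.mpr fun h => by simp [h, n] at hn0
  rw [degree_lt_iff_coeff_zero]
  intro m hm
  rw [coeff_sub, coeff_C_mul, coeff_X_add_C_pow]
  obtain rfl | rfl | hlt : m = n - 1 ∨ m = n ∨ n < m := by omega
  · rw [Nat.sub_sub_self hn0, Nat.choose_symm hn0, Nat.choose_one_right, pow_one,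
      nextCoeff_of_natDegree_pos hn0]
    field_simp
    ring
  · rw [Nat.sub_self, pow_zero, Nat.choose_self, hn, coeff_natDegree]
    simp
  · simp [coeff_eq_zero_of_natDegree_lt hlt, Nat.choose_eq_zero_of_lt hlt]

namespace LaurentSeries

theorem algebraMap_eq_C {R : Type*} [CommSemiring R] (c : R) :
    algebraMap R (LaurentSeries R) c = HahnSeries.C c := by
  rw [HahnSeries.algebraMap_apply']
  simp

variable {K : Type*} [Field K]

theorem coeff_algebraMap_mul (c : K) (M : LaurentSeries K) (k : ℤ) :
    (algebraMap K _ c * M).coeff k = c * M.coeff k := by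
  rw [algebraMap_eq_C, HahnSeries.C_mul_eq_smul, HahnSeries.coeff_smul, smul_eq_mul]

theorem coeff_algebraMap_mul_add_algebraMap (c t : K) (M : LaurentSeries K) {k : ℤ}
    (hk : k ≠ 0) : (algebraMap K _ c * (M + algebraMap K _ t)).coeff k = c * M.coeff k := by
  rw [coeff_algebraMap_mul, HahnSeries.coeff_add, algebraMap_eq_C, HahnSeries.C_apply,
    HahnSeries.coeff_single_of_ne hk, add_zero]

theorem coeff_aeval_eq_zero_of_lt (Q : K[X]) (M : LaurentSeries K) {k : ℤ}
    (hk : ∀ i ∈ Q.support, k < i * M.order) : (aeval M Q).coeff k = 0 := by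
  rw [aeval_eq_sum_range, HahnSeries.coeff_sum]
  refine Finset.sum_eq_zero fun i _ => ?_
  rw [Algebra.smul_def, coeff_algebraMap_mul]
  by_cases hi : Q.coeff i = 0
  · rw [hi, zero_mul]
  rw [HahnSeries.coeff_eq_zero_of_lt_order, mul_zero]
  simpa using hk i (mem_support_iff.mpr hi)

variable {M N : LaurentSeries K}

theorem coeff_aeval_natDegree_mul_order_ne_zero {Q : K[X]} (hQ : Q ≠ 0) (hM : M.order < 0) :
    (aeval M Q).coeff (Q.natDegree * M.order) ≠ 0 := by
  have hsplit : aeval M Q =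
      aeval M Q.eraseLead + algebraMap K _ Q.leadingCoeff * M ^ Q.natDegree := by
    conv_lhs => rw [← Q.eraseLead_add_C_mul_X_pow]
    simp only [map_add, map_mul, aeval_C, map_pow, aeval_X]
  have hM0 : M ^ Q.natDegree ≠ 0 := pow_ne_zero _ fun h => by simp [h] at hM
  rw [hsplit, HahnSeries.coeff_add, coeff_algebraMap_mul, coeff_aeval_eq_zero_of_lt, zero_add]
  · have := mt HahnSeries.coeff_order_eq_zero.mp hM0
    simp only [HahnSeries.order_pow, nsmul_eq_mul] at this
    exact mul_ne_zero (leadingCoeff_ne_zero.mpr hQ) this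
  · intro i hi
    exact mul_lt_mul_of_neg_right (by exact_mod_cast lt_natDegree_of_mem_eraseLead_support hi) hM

theorem transcendental_of_order_neg (hM : M.order < 0) : Transcendental K M := by
  rintro ⟨Q, hQ, h⟩
  exact coeff_aeval_natDegree_mul_order_ne_zero hQ hM (by rw [h, HahnSeries.coeff_zero])

theorem order_aeval_of_order_neg {Q : K[X]} (hQ : Q ≠ 0) (hM : M.order < 0) :
    (aeval M Q).order = Q.natDegree * M.order := by
  have hne := coeff_aeval_natDegree_mul_order_ne_zero hQ hM
  refine le_antisymm (HahnSeries.order_le_of_coeff_ne_zero hne)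
    ((HahnSeries.le_order_iff_forall (HahnSeries.ne_zero_of_coeff_ne_zero hne)).mpr
      fun k hk => coeff_aeval_eq_zero_of_lt Q M fun i hi => hk.trans_le ?_)
  exact mul_le_mul_of_nonpos_right (by exact_mod_cast le_natDegree_of_mem_supp i hi) hM.le

theorem order_eq_of_aeval_eq {A B : K[X]} (hAB : A.natDegree = B.natDegree)
    (hA : 0 < A.natDegree) (hM : M.order < 0) (h : aeval M A = aeval N B) :
    N.order = M.order := by
  have hA0 : A ≠ 0 := ne_zero_of_natDegree_gt hA
  have hB0 : B ≠ 0 := ne_zero_of_natDegree_gt (hAB ▸ hA)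
  have hN : N.order < 0 := by
    by_contra! hN
    refine coeff_aeval_natDegree_mul_order_ne_zero hA0 hM ?_
    rw [h]
    exact coeff_aeval_eq_zero_of_lt B N fun i _ =>
      (mul_neg_of_pos_of_neg (by exact_mod_cast hA) hM).trans_le (by positivity)
  have := order_aeval_of_order_neg hA0 hM
  rw [h, order_aeval_of_order_neg hB0 hN, hAB] at this
  exact mul_left_cancel₀ (by exact_mod_cast (hAB ▸ hA).ne') this

theorem coeff_aeval_sub_pow_eq_zero (Q : K[X]) (hQ : (Q.natDegree : K) ≠ 0) {α : K}
    (hα : α ^ Q.natDegree = Q.leadingCoeff) (hM : M.order ≤ 0) {k : ℤ}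
    (hk : k < (Q.natDegree - 2 : ℤ) * M.order) :
    (aeval M Q - (algebraMap K _ α * (M + algebraMap K _
      (Q.nextCoeff / (Q.natDegree * Q.leadingCoeff)))) ^ Q.natDegree).coeff k = 0 := by
  have hpow : (algebraMap K _ α * (M + algebraMap K _
      (Q.nextCoeff / (Q.natDegree * Q.leadingCoeff)))) ^ Q.natDegree =
      aeval M (Polynomial.C Q.leadingCoeff *
        (X + Polynomial.C (Q.nextCoeff / (Q.natDegree * Q.leadingCoeff))) ^ Q.natDegree) := by
    rw [mul_pow, ← map_pow, hα]
    simp only [map_mul, aeval_C, map_pow, map_add, aeval_X]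
  rw [hpow, ← map_sub]
  refine coeff_aeval_eq_zero_of_lt _ M fun i hi => hk.trans_le ?_
  have hi : (i : WithBot ℕ) < ↑(Q.natDegree - 1) :=
    (le_degree_of_mem_supp i hi).trans_lt (Q.degree_sub_C_mul_X_add_C_pow_lt hQ)
  have : (i : ℤ) ≤ Q.natDegree - 2 := by
    have : i < Q.natDegree - 1 := by exact_mod_cast hi
    omega
  exact mul_le_mul_of_nonpos_right this hM

theorem exists_pow_eq_one_coeff_sub_eq_zero {n : ℕ} {ζ : K} (hζ : IsPrimitiveRoot ζ n)
    (hn : 0 < n) {x y : LaurentSeries K} {o : ℤ}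
    (hx : ∀ k < o, x.coeff k = 0) (hy : ∀ k < o, y.coeff k = 0) (hyo : y.coeff o ≠ 0)
    (hxy : ∀ k < (n - 2 : ℤ) * o, (x ^ n - y ^ n).coeff k = 0) :
    ∃ c : K, c ^ n = 1 ∧ ∀ k < -o, (x - algebraMap K _ c * y).coeff k = 0 := by
  classical
  set S := nthRootsFinset n (1 : K)
  set f : K → LaurentSeries K := fun c => x - algebraMap K _ c * y
  have hS : ∀ c ∈ S, c ^ n = 1 := fun c hc => (mem_nthRootsFinset hn 1).mp hc
  by_cases hzero : ∃ c ∈ S, f c = 0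
  · obtain ⟨c, hc, hfc⟩ := hzero
    exact ⟨c, hS c hc, fun k _ => by rw [show x - _ = f c from rfl, hfc, HahnSeries.coeff_zero]⟩
  push Not at hzero
  have hcoeff : ∀ c k, (f c).coeff k = x.coeff k - c * y.coeff k := fun c k => by
    simp only [f, HahnSeries.coeff_sub, coeff_algebraMap_mul]
  have hge : ∀ c ∈ S, o ≤ (f c).order := fun c hc =>
    (HahnSeries.le_order_iff_forall (hzero c hc)).mpr fun k hk => by
      rw [hcoeff, hx k hk, hy k hk, mul_zero, sub_zero]
  obtain ⟨c₁, hc₁, hmax⟩ := S.exists_max_image (fun c => (f c).order)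
    ⟨1, one_mem_nthRootsFinset hn⟩
  -- `f c' - f c = (c - c') y` has order `o`, so at most one factor has order `> o`
  have hothers : ∀ c ∈ S.erase c₁, (f c).order = o := by
    intro c hc
    obtain ⟨hne, hc⟩ := Finset.mem_erase.mp hc
    refine le_antisymm ?_ (hge c hc)
    by_contra! hlt
    have h₁ := HahnSeries.coeff_eq_zero_of_lt_order hlt
    have h₂ := HahnSeries.coeff_eq_zero_of_lt_order (hlt.trans_le (hmax c hc))
    rw [hcoeff] at h₁ h₂
    exact hne (mul_right_cancel₀ hyo (by linear_combination h₂ - h₁))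
  have hprod := hζ.pow_sub_pow_eq_prod_sub_algebraMap_mul hn x y
  have hsum : (x ^ n - y ^ n).order = (f c₁).order + (n - 1 : ℤ) * o := by
    rw [hprod, HahnSeries.order_prod _ hzero, ← Finset.add_sum_erase _ _ hc₁,
      Finset.sum_congr rfl hothers, Finset.sum_const, Finset.card_erase_of_mem hc₁,
      hζ.card_nthRootsFinset, nsmul_eq_mul, Nat.cast_sub hn, Nat.cast_one]
  have hbound : (n - 2 : ℤ) * o ≤ (x ^ n - y ^ n).order :=
    (HahnSeries.le_order_iff_forall (hprod ▸ Finset.prod_ne_zero_iff.mpr hzero)).mpr hxy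
  refine ⟨c₁, hS c₁ hc₁, fun k hk => HahnSeries.coeff_eq_zero_of_lt_order ?_⟩
  linarith

theorem exists_coeff_eq_mul_of_aeval_eq [IsAlgClosed K] {A B : K[X]}
    (hAB : A.natDegree = B.natDegree) (hn : (A.natDegree : K) ≠ 0) (hM : M.order < 0)
    (h : aeval M A = aeval N B) :
    N.order = M.order ∧ ∃ a : K, a ≠ 0 ∧ a ^ A.natDegree = A.leadingCoeff / B.leadingCoeff ∧
      ∀ k ≠ 0, k < -M.order → N.coeff k = a * M.coeff k := by
  set n := A.natDegree
  have hn0 : 0 < n := Nat.pos_of_ne_zero fun h => hn (by simp [h])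
  have hNM := order_eq_of_aeval_eq hAB hn0 hM h
  refine ⟨hNM, ?_⟩
  set o := M.order
  obtain ⟨α, hα⟩ := IsAlgClosed.exists_pow_nat_eq A.leadingCoeff hn0
  have hα0 : α ≠ 0 := by
    rintro rfl
    exact leadingCoeff_ne_zero.mpr (ne_zero_of_natDegree_gt hn0) (by simp [← hα, hn0.ne'])
  have hBn : 0 < B.natDegree := hAB ▸ hn0
  obtain ⟨β, hβ⟩ := IsAlgClosed.exists_pow_nat_eq B.leadingCoeff hBn
  have hβ0 : β ≠ 0 := by
    rintro rfl
    exact leadingCoeff_ne_zero.mpr (ne_zero_of_natDegree_gt hBn) (by simp [← hβ, hBn.ne'])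
  have : NeZero (n : K) := ⟨hn⟩
  obtain ⟨ζ, hζ⟩ := HasEnoughRootsOfUnity.exists_primitiveRoot K n
  set x := algebraMap K _ α * (M + algebraMap K _ (A.nextCoeff / (n * A.leadingCoeff)))
  set y := algebraMap K _ β *
    (N + algebraMap K _ (B.nextCoeff / (B.natDegree * B.leadingCoeff)))
  have hx : ∀ k ≠ 0, x.coeff k = α * M.coeff k := fun k hk =>
    coeff_algebraMap_mul_add_algebraMap _ _ _ hk
  have hy : ∀ k ≠ 0, y.coeff k = β * N.coeff k := fun k hk =>
    coeff_algebraMap_mul_add_algebraMap _ _ _ hk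
  have hxy : ∀ k < (n - 2 : ℤ) * o, (x ^ n - y ^ n).coeff k = 0 := by
    intro k hk
    have hA := coeff_aeval_sub_pow_eq_zero A hn hα hM.le hk
    have hB := coeff_aeval_sub_pow_eq_zero B (hAB ▸ hn) hβ (hNM ▸ hM.le) (by rwa [← hAB, hNM])
    have : x ^ n - y ^ n = (aeval N B - y ^ B.natDegree) - (aeval M A - x ^ n) := by
      rw [← hAB, h]; ring
    rw [this, HahnSeries.coeff_sub, hA, hB, sub_zero]
  have hyo : y.coeff o ≠ 0 := by
    have hN0 : N ≠ 0 := fun h0 => by simp [h0] at hNM; omega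
    rw [hy o hM.ne, ← hNM]
    exact mul_ne_zero hβ0 (mt HahnSeries.coeff_order_eq_zero.mp hN0)
  obtain ⟨c, hc, hvan⟩ := exists_pow_eq_one_coeff_sub_eq_zero hζ hn0
    (fun k hk => by rw [hx k (hk.trans hM).ne, HahnSeries.coeff_eq_zero_of_lt_order hk, mul_zero])
    (fun k hk => by
      rw [hy k (hk.trans hM).ne, HahnSeries.coeff_eq_zero_of_lt_order (hNM ▸ hk), mul_zero])
    hyo hxy
  have hc0 : c ≠ 0 := by rintro rfl; simp [hn0.ne'] at hc
  refine ⟨α / (c * β), div_ne_zero hα0 (mul_ne_zero hc0 hβ0), ?_, fun k hk0 hk => ?_⟩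
  · rw [div_pow, mul_pow, hc, one_mul, hα, hAB, hβ]
  · have := hvan k hk
    rw [HahnSeries.coeff_sub, hx k hk0, coeff_algebraMap_mul, hy k hk0] at this
    field_simp
    linear_combination -this

end LaurentSeries

namespace LaurentPolynomial

variable {R : Type*} [CommSemiring R]

noncomputable def toLaurentSeries : R[T;T⁻¹] →ₐ[R] LaurentSeries R :=
  AddMonoidAlgebra.lift R (LaurentSeries R) ℤ
    { toFun n := HahnSeries.single n.toAdd 1
      map_one' := rfl
      map_mul' m n := by simp [HahnSeries.single_mul_single] }

@[simp]
theorem coeff_toLaurentSeries (f : R[T;T⁻¹]) (n : ℤ) :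
    (toLaurentSeries f).coeff n = f.coeff n := by
  induction f using AddMonoidAlgebra.induction_linear with
  | zero => simp
  | add f g hf hg => simp [hf, hg]
  | single m r =>
    rw [toLaurentSeries, AddMonoidAlgebra.lift_single, AddMonoidAlgebra.coeff_single,
      Finsupp.single_apply, Algebra.smul_def, LaurentSeries.algebraMap_eq_C,
      HahnSeries.C_mul_eq_smul, HahnSeries.coeff_smul]
    simp [HahnSeries.coeff_single, eq_comm]

theorem toLaurentSeries_injective : Function.Injective (toLaurentSeries (R := R)) :=
  fun f g h => LaurentPolynomial.ext fun n => by
    rw [← coeff_toLaurentSeries, h, coeff_toLaurentSeries]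

/-- The lowest exponent occurring in `f`, with the junk value `0` for `f = 0`. -/
noncomputable def order (f : R[T;T⁻¹]) : ℤ := (toLaurentSeries f).order

theorem coeff_eq_zero_of_lt_order {f : R[T;T⁻¹]} {n : ℤ} (h : n < f.order) : f.coeff n = 0 := by
  rw [← coeff_toLaurentSeries]
  exact HahnSeries.coeff_eq_zero_of_lt_order h

theorem coeff_order_ne_zero {f : R[T;T⁻¹]} (h : f ≠ 0) : f.coeff f.order ≠ 0 := by
  rw [← coeff_toLaurentSeries]
  exact mt HahnSeries.coeff_order_eq_zero.mp fun h0 => h (toLaurentSeries_injective (by simp [h0]))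

theorem coeff_C_mul (a : R) (f : R[T;T⁻¹]) (n : ℤ) :
    (C a * f).coeff n = a * f.coeff n := by
  rw [← single_eq_C]
  exact AddMonoidAlgebra.coeff_single_zero_mul f a n

theorem aeval_invert (f : R[T;T⁻¹]) (Q : R[X]) :
    aeval (invert f) Q = invert (aeval f Q) :=
  aeval_algHom_apply invert.toAlgHom f Q

theorem order_neg_or_order_invert_neg {f : R[T;T⁻¹]} (hf : ∀ c, f ≠ C c) :
    f.order < 0 ∨ (invert f).order < 0 := by
  by_contra! h
  refine hf (f.coeff 0) (LaurentPolynomial.ext fun n => ?_)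
  rw [C_apply]
  split_ifs with hn
  · rw [hn]
  rcases lt_or_gt_of_ne hn with hn | hn
  · exact coeff_eq_zero_of_lt_order (hn.trans_le h.1)
  · simpa using coeff_eq_zero_of_lt_order (f := invert f) (n := -n) (by omega)

section Field

variable {K : Type*} [Field K]

theorem transcendental_of_forall_ne_C {f : K[T;T⁻¹]} (hf : ∀ c, f ≠ C c) :
    Transcendental K f := by
  rcases order_neg_or_order_invert_neg hf with h | h
  · exact fun hf' => LaurentSeries.transcendental_of_order_neg h (hf'.algHom toLaurentSeries)
  · exact fun hf' => LaurentSeries.transcendental_of_order_neg h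
      ((hf'.algHom invert.toAlgHom).algHom toLaurentSeries)

theorem eq_comp_of_aeval_eq {f : K[T;T⁻¹]} (hf : Transcendental K f) {A B : K[X]} {a b : K}
    (h : aeval f A = aeval (C a * f + C b) B) :
    A = B.comp (Polynomial.C a * X + Polynomial.C b) := by
  refine transcendental_iff_injective.mp hf ?_
  rw [h, aeval_comp]
  simp only [map_add, map_mul, aeval_C, aeval_X, ← C_eq_algebraMap]

theorem eq_C_mul_add_C_of_coeff_eq_mul {f g : K[T;T⁻¹]} {a : K}
    (h : ∀ n ≠ 0, g.coeff n = a * f.coeff n) : g = C a * f + C (g.coeff 0 - a * f.coeff 0) := by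
  refine LaurentPolynomial.ext fun n => ?_
  simp only [AddMonoidAlgebra.coeff_add, Finsupp.add_apply, coeff_C_mul, C_apply]
  split_ifs with hn
  · rw [hn]; ring
  · rw [h n hn, add_zero]

theorem exists_eq_C_mul_add_C_of_coeff_eq_mul_of_le {f g : K[T;T⁻¹]} {lo hi : ℤ} {a : K}
    (ha : a ≠ 0) (hout : ∀ n, (n < lo ∨ hi < n) → f.coeff n = 0 ∧ g.coeff n = 0)
    (h : ∀ n ≠ 0, lo ≤ n → n ≤ hi → g.coeff n = a * f.coeff n) :
    ∃ a b : K, a ≠ 0 ∧ g = C a * f + C b := by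
  refine ⟨a, _, ha, eq_C_mul_add_C_of_coeff_eq_mul fun n hn => ?_⟩
  by_cases hn' : lo ≤ n ∧ n ≤ hi
  · exact h n hn hn'.1 hn'.2
  · rw [(hout n (by omega)).1, (hout n (by omega)).2, mul_zero]

theorem eq_C_mul_T_add_C_add_C_mul_T {f : K[T;T⁻¹]} {r : ℤ} (hr : r ≠ 0)
    (h : ∀ n, n ≠ -r → n ≠ 0 → n ≠ r → f.coeff n = 0) :
    f = C (f.coeff (-r)) * T (-r) + C (f.coeff 0) + C (f.coeff r) * T r := by
  refine LaurentPolynomial.ext fun n => ?_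
  simp only [AddMonoidAlgebra.coeff_add, Finsupp.add_apply, coeff_C_mul, C_apply, T_apply]
  split_ifs <;>
    first | omega | (rw [h n (by omega) (by omega) (by omega)]; ring) | (subst_vars; ring)

theorem eq_trinomial_of_coeff_eq_mul {L₁ L₂ : K[T;T⁻¹]} {r : ℤ} (hr : 0 < r) {a₀ a₁ : K}
    (ha : a₀ ≠ a₁)
    (hout : ∀ k, (k < -r ∨ r < k) → L₁.coeff k = 0 ∧ L₂.coeff k = 0)
    (hrel₀ : ∀ k ≠ 0, k < r → L₂.coeff k = a₀ * L₁.coeff k)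
    (hrel₁ : ∀ k ≠ 0, -r < k → L₂.coeff k = a₁ * L₁.coeff k) :
    L₁ = C (L₁.coeff (-r)) * T (-r) + C (L₁.coeff 0) + C (L₁.coeff r) * T r ∧
      L₂ = C (a₀ * L₁.coeff (-r)) * T (-r) + C (L₂.coeff 0) + C (a₁ * L₁.coeff r) * T r := by
  have hsupp : ∀ k, k ≠ -r → k ≠ 0 → k ≠ r → L₁.coeff k = 0 ∧ L₂.coeff k = 0 := by
    intro k h₁ h₂ h₃
    by_cases hk : -r < k ∧ k < r
    · have e₀ := hrel₀ k h₂ hk.2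
      have e₁ := hrel₁ k h₂ hk.1
      have hk₁ : L₁.coeff k = 0 := (mul_eq_zero.mp (by linear_combination e₁ - e₀ :
        (a₀ - a₁) * L₁.coeff k = 0)).resolve_left (sub_ne_zero.mpr ha)
      exact ⟨hk₁, by rw [e₀, hk₁, mul_zero]⟩
    · exact hout k (by omega)
  refine ⟨eq_C_mul_T_add_C_add_C_mul_T hr.ne' fun k h₁ h₂ h₃ => (hsupp k h₁ h₂ h₃).1, ?_⟩
  conv_lhs => rw [eq_C_mul_T_add_C_add_C_mul_T hr.ne' fun k h₁ h₂ h₃ => (hsupp k h₁ h₂ h₃).2]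
  rw [hrel₀ (-r) (by omega) (by omega), hrel₁ r hr.ne' (by omega)]

end Field

section IsAlgClosed

variable {K : Type*} [Field K] [IsAlgClosed K] {A B : K[X]} {L₁ L₂ : K[T;T⁻¹]}

theorem exists_coeff_eq_mul_of_aeval_eq (hAB : A.natDegree = B.natDegree)
    (hn : (A.natDegree : K) ≠ 0) (hL₁ : L₁.order < 0) (h : aeval L₁ A = aeval L₂ B) :
    L₂.order = L₁.order ∧ ∃ a : K, a ≠ 0 ∧ a ^ A.natDegree = A.leadingCoeff / B.leadingCoeff ∧
      ∀ k ≠ 0, k < -L₁.order → L₂.coeff k = a * L₁.coeff k := by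
  have h' : aeval (toLaurentSeries L₁) A = aeval (toLaurentSeries L₂) B := by
    rw [aeval_algHom_apply, aeval_algHom_apply, h]
  simpa [order] using LaurentSeries.exists_coeff_eq_mul_of_aeval_eq hAB hn hL₁ h'

theorem exists_eq_C_mul_add_C_of_order_nonneg (hAB : A.natDegree = B.natDegree)
    (hn : (A.natDegree : K) ≠ 0) (h : aeval L₁ A = aeval L₂ B) (h₀ : 0 ≤ L₁.order)
    (hinf : (invert L₁).order < 0) : ∃ a b : K, a ≠ 0 ∧ L₂ = C a * L₁ + C b := by
  obtain ⟨-, a, ha, -, hrel⟩ :=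
    exists_coeff_eq_mul_of_aeval_eq hAB hn hinf (by rw [aeval_invert, aeval_invert, h])
  -- a pole of `L₂` at `0` would, by the same lemma, give one to `L₁`
  have h₀' : 0 ≤ L₂.order := by
    by_contra! h₂
    have := (exists_coeff_eq_mul_of_aeval_eq hAB.symm (hAB ▸ hn) h₂ h.symm).1
    omega
  refine ⟨a, _, ha, eq_C_mul_add_C_of_coeff_eq_mul fun k hk => ?_⟩
  rcases lt_or_gt_of_ne hk with hk | hk
  · rw [coeff_eq_zero_of_lt_order (hk.trans_le h₀'), coeff_eq_zero_of_lt_order (hk.trans_le h₀),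
      mul_zero]
  · simpa using hrel (-k) (by omega) (by omega)

theorem eq_C_mul_add_C_or_trinomial_of_order_neg (hAB : A.natDegree = B.natDegree)
    (hn : (A.natDegree : K) ≠ 0) (h : aeval L₁ A = aeval L₂ B) (h₀ : L₁.order < 0)
    (hinf : (invert L₁).order < 0) :
    (∃ a b : K, a ≠ 0 ∧ L₂ = C a * L₁ + C b) ∨
      ∃ r : ℕ, 0 < r ∧ ∃ p q c₁ c₂ a a' : K, p ≠ 0 ∧ q ≠ 0 ∧ a ≠ 0 ∧ a' ≠ 0 ∧
        a ^ A.natDegree = a' ^ A.natDegree ∧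
        L₁ = C p * T (-r) + C c₁ + C q * T r ∧
        L₂ = C (a' * p) * T (-r) + C c₂ + C (a * q) * T r := by
  -- `a₀` comes from the pole at `0`, `a₁` from the pole at `∞`
  obtain ⟨ho, a₀, ha₀, hpow₀, hrel₀⟩ := exists_coeff_eq_mul_of_aeval_eq hAB hn h₀ h
  obtain ⟨hu, a₁, ha₁, hpow₁, hrel₁'⟩ :=
    exists_coeff_eq_mul_of_aeval_eq hAB hn hinf (by rw [aeval_invert, aeval_invert, h])
  set o := L₁.order
  set u := (invert L₁).order
  have hrel₁ : ∀ k ≠ 0, u < k → L₂.coeff k = a₁ * L₁.coeff k := fun k hk hku => by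
    simpa using hrel₁' (-k) (neg_ne_zero.mpr hk) (by omega)
  have hout : ∀ k, (k < o ∨ -u < k) → L₁.coeff k = 0 ∧ L₂.coeff k = 0 := by
    rintro k (hk | hk)
    · exact ⟨coeff_eq_zero_of_lt_order hk, coeff_eq_zero_of_lt_order (ho ▸ hk)⟩
    · exact ⟨by simpa using coeff_eq_zero_of_lt_order (f := invert L₁) (n := -k) (by omega),
        by simpa using coeff_eq_zero_of_lt_order (f := invert L₂) (n := -k) (by omega)⟩
  rcases lt_trichotomy o u with hou | hou | hou
  · exact Or.inl (exists_eq_C_mul_add_C_of_coeff_eq_mul_of_le ha₀ hout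
      fun k hk _ hk' => hrel₀ k hk (by omega))
  · by_cases ha : a₀ = a₁
    · refine Or.inl (exists_eq_C_mul_add_C_of_coeff_eq_mul_of_le ha₁ hout fun k hk hok _ => ?_)
      rcases hok.eq_or_lt with rfl | hok
      · rw [← ha]; exact hrel₀ _ hk (by omega)
      · exact hrel₁ k hk (by omega)
    · right
      obtain ⟨r, hr⟩ : ∃ r : ℕ, (r : ℤ) = -o := ⟨(-o).toNat, by omega⟩
      obtain ⟨hL₁, hL₂⟩ := eq_trinomial_of_coeff_eq_mul (L₁ := L₁) (L₂ := L₂) (r := r)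
        (by omega) ha (fun k hk => hout k (by omega)) (fun k hk hkr => hrel₀ k hk (by omega))
        (fun k hk hkr => hrel₁ k hk (by omega))
      refine ⟨r, by omega, _, _, _, _, a₁, a₀, ?_, ?_, ha₁, ha₀, hpow₁.trans hpow₀.symm, hL₁, hL₂⟩
      · rw [hr, neg_neg]
        exact coeff_order_ne_zero fun h0 => by simp [o, h0, order] at h₀
      · rw [show (r : ℤ) = -u by omega]
        simpa using coeff_order_ne_zero (f := invert L₁) fun h0 => by simp [u, h0, order] at hinf
  · exact Or.inl (exists_eq_C_mul_add_C_of_coeff_eq_mul_of_le ha₁ hout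
      fun k hk hok _ => hrel₁ k hk (by omega))

theorem eq_C_mul_add_C_or_trinomial (hAB : A.natDegree = B.natDegree)
    (hn : (A.natDegree : K) ≠ 0) (hL₁ : ∀ c, L₁ ≠ C c) (h : aeval L₁ A = aeval L₂ B) :
    (∃ a b : K, a ≠ 0 ∧ L₂ = C a * L₁ + C b) ∨
      ∃ r : ℕ, 0 < r ∧ ∃ p q c₁ c₂ a a' : K, p ≠ 0 ∧ q ≠ 0 ∧ a ≠ 0 ∧ a' ≠ 0 ∧
        a ^ A.natDegree = a' ^ A.natDegree ∧
        L₁ = C p * T (-r) + C c₁ + C q * T r ∧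
        L₂ = C (a' * p) * T (-r) + C c₂ + C (a * q) * T r := by
  rcases le_or_gt 0 L₁.order with h₀ | h₀
  · exact Or.inl (exists_eq_C_mul_add_C_of_order_nonneg hAB hn h h₀
      ((order_neg_or_order_invert_neg hL₁).resolve_left h₀.not_gt))
  rcases le_or_gt 0 (invert L₁).order with hinf | hinf
  · obtain ⟨a, b, ha, hab⟩ := exists_eq_C_mul_add_C_of_order_nonneg hAB hn
      (by rw [aeval_invert, aeval_invert, h]) hinf (by rwa [involutive_invert L₁])
    refine Or.inl ⟨a, b, ha, involutive_invert.injective ?_⟩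
    simpa using hab
  · exact eq_C_mul_add_C_or_trinomial_of_order_neg hAB hn h h₀ hinf

theorem exists_aeval_eq_C_pow_mul_T_add {r : ℕ} (hr : 0 < r) {p q : K} (hp : p ≠ 0) (hq : q ≠ 0)
    (c : K) : ∃ b : K, b ^ (2 * r) * p = q ∧ ∃ w : K[X], w.degree = 1 ∧
      aeval (C p * T (-r) + C c + C q * T r) w = C (b ^ r) * T r + C (b ^ r)⁻¹ * T (-r) := by
  obtain ⟨s, hs⟩ := IsAlgClosed.exists_pow_nat_eq (p * q)⁻¹ two_pos
  have hs' : s ^ 2 * (p * q) = 1 := by rw [hs, inv_mul_cancel₀ (mul_ne_zero hp hq)]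
  have hs0 : s ≠ 0 := by rintro rfl; simp at hs'
  obtain ⟨b, hb⟩ := IsAlgClosed.exists_pow_nat_eq (s * q) hr
  have hinv : (b ^ r)⁻¹ = s * p := by
    rw [hb]
    exact inv_eq_of_mul_eq_one_right (by linear_combination hs')
  refine ⟨b, ?_, Polynomial.C s * X + Polynomial.C (-(s * c)), degree_linear hs0, ?_⟩
  · rw [pow_mul', hb]
    linear_combination q * hs'
  · rw [hinv, hb]
    simp only [map_add, map_mul, aeval_C, aeval_X, ← C_eq_algebraMap, map_neg]
    ring

end IsAlgClosed

end LaurentPolynomial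

theorem div_pow_mul_eq_one {K : Type*} [Field K] {m n : ℕ} {a a' b₁ b₂ : K} (hb₁ : b₁ ≠ 0)
    (ha' : a' ≠ 0) (hb : b₂ ^ m * a' = a * b₁ ^ m) (ha : a ^ n = a' ^ n) :
    (b₂ / b₁) ^ (m * n) = 1 := by
  have hm : (b₂ / b₁) ^ m = a / a' := by
    rw [div_pow, div_eq_div_iff (pow_ne_zero _ hb₁) ha', hb]
  rw [pow_mul, hm, div_pow, ha, div_self (pow_ne_zero _ ha')]

theorem laurent_double_decomposition_equal_degrees_general
    (A B : ℂ[X]) (hA : 1 ≤ A.natDegree)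
    (L₁ L₂ : LaurentPolynomial ℂ)
    (hL₁ : ∀ c : ℂ, L₁ ≠ LaurentPolynomial.C c)
    (h : Polynomial.aeval L₁ A = Polynomial.aeval L₂ B)
    (hdeg : A.natDegree = B.natDegree) :
    (∃ a b : ℂ, a ≠ 0 ∧
        A = B.comp (Polynomial.C a * X + Polynomial.C b) ∧
        L₂ = LaurentPolynomial.C a * L₁ + LaurentPolynomial.C b) ∨
    (∃ (r : ℕ) (a ν : ℂ), 1 ≤ r ∧ a ≠ 0 ∧ (∃ k : ℕ, 1 ≤ k ∧ ν ^ k = 1) ∧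
        ∃ w₁ w₂ : ℂ[X], w₁.degree = 1 ∧ w₂.degree = 1 ∧
          Polynomial.aeval L₁ w₁ =
            LaurentPolynomial.C (a ^ r) * LaurentPolynomial.T (r : ℤ) +
              LaurentPolynomial.C ((a ^ r)⁻¹) * LaurentPolynomial.T (-(r : ℤ)) ∧
          Polynomial.aeval L₂ w₂ =
            LaurentPolynomial.C ((a * ν) ^ r) * LaurentPolynomial.T (r : ℤ) +
              LaurentPolynomial.C (((a * ν) ^ r)⁻¹) * LaurentPolynomial.T (-(r : ℤ))) := by
  have hn : (A.natDegree : ℂ) ≠ 0 := by exact_mod_cast (by omega : A.natDegree ≠ 0)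
  rcases eq_C_mul_add_C_or_trinomial hdeg hn hL₁ h with
    ⟨a, b, ha, rfl⟩ | ⟨r, hr, p, q, c₁, c₂, a, a', hp, hq, ha, ha', haa, rfl, rfl⟩
  · exact Or.inl ⟨a, b, ha, eq_comp_of_aeval_eq (transcendental_of_forall_ne_C hL₁) h, rfl⟩
  obtain ⟨b₁, hb₁, w₁, hw₁, heq₁⟩ := exists_aeval_eq_C_pow_mul_T_add hr hp hq c₁
  obtain ⟨b₂, hb₂, w₂, hw₂, heq₂⟩ :=
    exists_aeval_eq_C_pow_mul_T_add hr (mul_ne_zero ha' hp) (mul_ne_zero ha hq) c₂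
  have hb₁0 : b₁ ≠ 0 := by rintro rfl; simp [hr.ne', hq.symm] at hb₁
  have hν : (b₂ / b₁) ^ (2 * r * A.natDegree) = 1 :=
    div_pow_mul_eq_one hb₁0 ha' (mul_right_cancel₀ hp (by linear_combination hb₂ - a * hb₁)) haa
  refine Or.inr ⟨r, b₁, b₂ / b₁, hr, hb₁0,
    ⟨2 * r * A.natDegree, Nat.mul_pos (Nat.mul_pos two_pos hr) hA, hν⟩,
    w₁, w₂, hw₁, hw₂, heq₁, ?_⟩
  rwa [mul_div_cancel₀ _ hb₁0]

/-- **Lemma on double decompositions of Laurent polynomials with equal outer degrees.**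
If `A ∘ L₁ = B ∘ L₂` for nonconstant complex polynomials `A, B` of the same degree and
nonconstant Laurent polynomials `L₁, L₂`, then either the two decompositions differ by a
degree-one polynomial `w(z) = az + b` (i.e. `A = B ∘ w`, `L₂ = a L₁ + b`), or after
degree-one changes `w₁, w₂` the inner functions become `a^r z^r + a^{-r} z^{-r}` and
`(aν)^r z^r + (aν)^{-r} z^{-r}` for some `r ≥ 1`, `a ≠ 0` and a root of unity `ν`. -/
theorem laurent_double_decomposition_equal_degrees
    (A B : ℂ[X]) (hA : 1 ≤ A.natDegree) (hB : 1 ≤ B.natDegree)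
    (L₁ L₂ : LaurentPolynomial ℂ)
    (hL₁ : ∀ c : ℂ, L₁ ≠ LaurentPolynomial.C c)
    (hL₂ : ∀ c : ℂ, L₂ ≠ LaurentPolynomial.C c)
    (h : Polynomial.aeval L₁ A = Polynomial.aeval L₂ B)
    (hdeg : A.natDegree = B.natDegree) :
    (∃ a b : ℂ, a ≠ 0 ∧
        A = B.comp (Polynomial.C a * X + Polynomial.C b) ∧
        L₂ = LaurentPolynomial.C a * L₁ + LaurentPolynomial.C b) ∨
    (∃ (r : ℕ) (a ν : ℂ), 1 ≤ r ∧ a ≠ 0 ∧ (∃ k : ℕ, 1 ≤ k ∧ ν ^ k = 1) ∧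
        ∃ w₁ w₂ : ℂ[X], w₁.degree = 1 ∧ w₂.degree = 1 ∧
          Polynomial.aeval L₁ w₁ =
            LaurentPolynomial.C (a ^ r) * LaurentPolynomial.T (r : ℤ) +
              LaurentPolynomial.C ((a ^ r)⁻¹) * LaurentPolynomial.T (-(r : ℤ)) ∧
          Polynomial.aeval L₂ w₂ =
            LaurentPolynomial.C ((a * ν) ^ r) * LaurentPolynomial.T (r : ℤ) +
              LaurentPolynomial.C (((a * ν) ^ r)⁻¹) * LaurentPolynomial.T (-(r : ℤ))) :=
  laurent_double_decomposition_equal_degrees_general A B hA L₁ L₂ hL₁ h hdeg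
end

section
/- Let L ∈ ℂ[z,1/z] be a self-conjugate Laurent polynomial and suppose L = A ∘ L₁, where A ∈ ℂ[z] is a nonconstant polynomial and L₁ = ∑_{i=−n}^{n} c_i z^i is a Laurent polynomial with n ≥ 1, c_n ≠ 0, and c_{−n} = 1/c_n. Then the leading coefficient of A is real and |c_n| = |c_{−n}| = 1. -/
/-!
Write `d = deg A` and `c = cₙ`. Because `L₁` lives in degrees `[-n, n]` with `n > 0`, the extreme
coefficients of `L = A ∘ L₁`, in degrees `±n d`, come from the leading term of `A` alone: they
are `lc(A) c^d` and `lc(A) c₋ₙ^d = lc(A) c⁻ᵈ` (the lowest one is the highest one after the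
substitution `T ↦ T⁻¹`). Self-conjugacy says the first is the conjugate of the second. Comparing
absolute values gives `|c| = 1`, so `conj c = c⁻¹`, and cancelling `c⁻ᵈ` leaves
`conj lc(A) = lc(A)`.
-/

open Polynomial LaurentPolynomial

def SelfConjL (L : LaurentPolynomial ℂ) : Prop :=
  ∀ i : ℤ, (starRingEnd ℂ) (L.coeff i) = L.coeff (-i)

namespace LaurentPolynomial

section Semiring

variable {R : Type*} [Semiring R] {f g : R[T;T⁻¹]} {a b : ℤ}

theorem degree_le_iff_coeff_eq_zero : f.degree ≤ a ↔ ∀ i, a < i → f.coeff i = 0 := by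
  refine ⟨fun hf i hi => ?_, fun hf => Finset.max_le fun i hi => ?_⟩
  · by_contra hne
    have := (Finset.le_max (Finsupp.mem_support_iff.2 hne)).trans hf
    exact (WithBot.coe_le_coe.1 this).not_gt hi
  · by_contra hlt
    exact Finsupp.mem_support_iff.1 hi (hf i (WithBot.coe_lt_coe.1 (not_le.1 hlt)))

theorem le_of_mem_support_of_degree_le (hf : f.degree ≤ a) {i : ℤ} (hi : i ∈ f.coeff.support) :
    i ≤ a :=
  WithBot.coe_le_coe.1 ((Finset.le_max hi).trans hf)

theorem degree_mul_le (f g : R[T;T⁻¹]) : (f * g).degree ≤ f.degree + g.degree := by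
  simp only [degree, Finset.max_eq_sup_withBot]
  exact AddMonoidAlgebra.supDegree_mul_le fun _ _ => WithBot.coe_add ..

theorem coeff_mul_add_of_degree_le (hf : f.degree ≤ a) (hg : g.degree ≤ b) :
    (f * g).coeff (a + b) = f.coeff a * g.coeff b :=
  AddMonoidAlgebra.coeff_mul_add_of_uniqueAdd fun i j hi hj hij => by
    have := le_of_mem_support_of_degree_le hf hi
    have := le_of_mem_support_of_degree_le hg hj
    omega

theorem degree_pow_le (hf : f.degree ≤ a) (k : ℕ) : (f ^ k).degree ≤ (k * a : ℤ) := by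
  induction k with
  | zero => simpa using degree_C_le (1 : R)
  | succ k ih =>
    rw [pow_succ, Nat.cast_succ, add_one_mul, WithBot.coe_add]
    exact (degree_mul_le _ _).trans (add_le_add ih hf)

theorem coeff_pow_mul_of_degree_le (hf : f.degree ≤ a) (k : ℕ) :
    (f ^ k).coeff (k * a) = f.coeff a ^ k := by
  induction k with
  | zero => simp
  | succ k ih =>
    rw [pow_succ, Nat.cast_succ, add_one_mul, coeff_mul_add_of_degree_le (degree_pow_le hf k) hf,
      ih, pow_succ]

end Semiring

section CommSemiring

variable {R : Type*} [CommSemiring R] {f : R[T;T⁻¹]} {a : ℤ}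

theorem coeff_aeval_natDegree_mul_of_degree_le (ha : 0 < a) (hf : f.degree ≤ a) (p : R[X]) :
    (aeval f p).coeff (p.natDegree * a) = p.leadingCoeff * f.coeff a ^ p.natDegree := by
  rw [aeval_eq_sum_range, AddMonoidAlgebra.coeff_sum, Finset.sum_apply',
    Finset.sum_eq_single_of_mem _ (Finset.self_mem_range_succ _)]
  · rw [AddMonoidAlgebra.coeff_smul, Finsupp.smul_apply, coeff_pow_mul_of_degree_le hf, smul_eq_mul,
      leadingCoeff]
  · intro k hk hne
    have hkd : (k : ℤ) < p.natDegree := by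
      have := Finset.mem_range_succ_iff.1 hk
      omega
    rw [AddMonoidAlgebra.coeff_smul, Finsupp.smul_apply,
      degree_le_iff_coeff_eq_zero.1 (degree_pow_le hf k) _ (by nlinarith), smul_zero]

theorem coeff_aeval_neg_natDegree_mul_of_degree_invert_le (ha : 0 < a)
    (hf : (invert f).degree ≤ a) (p : R[X]) :
    (aeval f p).coeff (-(p.natDegree * a)) = p.leadingCoeff * f.coeff (-a) ^ p.natDegree := by
  simpa [aeval_algHom_apply] using coeff_aeval_natDegree_mul_of_degree_le ha hf p

end CommSemiring

end LaurentPolynomial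

namespace Complex

open ComplexConjugate

variable {a c : ℂ} {d : ℕ}

theorem norm_eq_one_of_conj_mul_pow_eq (ha : a ≠ 0) (hc : c ≠ 0) (hd : d ≠ 0)
    (h : conj (a * c ^ d) = a * c⁻¹ ^ d) : ‖c‖ = 1 := by
  have hpow : ‖c‖ ^ d = ‖c‖⁻¹ ^ d := by
    simpa [ha] using congrArg norm h
  have hinv : ‖c‖ = ‖c‖⁻¹ := (pow_left_inj₀ (norm_nonneg _) (by positivity) hd).1 hpow
  have hpos : 0 < ‖c‖ := norm_pos_iff.2 hc
  have : ‖c‖ * ‖c‖ = 1 := by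
    nth_rewrite 2 [hinv]
    exact mul_inv_cancel₀ hpos.ne'
  nlinarith

theorem conj_eq_of_conj_mul_pow_eq (hc : ‖c‖ = 1) (h : conj (a * c ^ d) = a * c⁻¹ ^ d) :
    conj a = a := by
  have hconj : conj c = c⁻¹ := by
    rw [inv_def, normSq_eq_norm_sq, hc]
    simp
  have hne : c⁻¹ ^ d ≠ 0 := pow_ne_zero _ (inv_ne_zero (norm_ne_zero_iff.1 (by simp [hc])))
  rw [map_mul, map_pow, hconj] at h
  exact mul_right_cancel₀ hne h

end Complex

/-- **Lemma on extreme coefficients.** Let `L = A ∘ L₁` be a decomposition of a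
self-conjugate Laurent polynomial `L`, where `A ∈ ℂ[z]` is nonconstant and
`L₁ = ∑_{i=-n}^{n} cᵢ zⁱ` with `n ≥ 1`, `cₙ ≠ 0` and `c₋ₙ = 1/cₙ`. Then the leading
coefficient of `A` is real and `|cₙ| = |c₋ₙ| = 1`. -/
theorem leadingCoeff_real_of_selfConjugate_decomposition
    (L L₁ : LaurentPolynomial ℂ) (A : ℂ[X])
    (hA : 1 ≤ A.natDegree)
    (n : ℕ) (hn : 1 ≤ n)
    (hsupp : ∀ i : ℤ, ((n : ℤ) < i ∨ i < -(n : ℤ)) → L₁.coeff i = 0)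
    (hcn : L₁.coeff (n : ℤ) ≠ 0)
    (hinv : L₁.coeff (-(n : ℤ)) = 1 / L₁.coeff (n : ℤ))
    (hsc : SelfConjL L)
    (h : L = Polynomial.aeval L₁ A) :
    (A.leadingCoeff).im = 0 ∧
      ‖L₁.coeff (n : ℤ)‖ = 1 ∧ ‖L₁.coeff (-(n : ℤ))‖ = 1 := by
  set c := L₁.coeff (n : ℤ)
  have hn₀ : (0 : ℤ) < n := by omega
  have hdeg : L₁.degree ≤ n :=
    degree_le_iff_coeff_eq_zero.2 fun i hi => hsupp i (.inl hi)
  have hdeg_invert : (invert L₁).degree ≤ n :=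
    degree_le_iff_coeff_eq_zero.2 fun i hi => by
      rw [invert_apply]
      exact hsupp (-i) (.inr (by omega))
  have hextreme : starRingEnd ℂ (A.leadingCoeff * c ^ A.natDegree) =
      A.leadingCoeff * c⁻¹ ^ A.natDegree := by
    rw [← coeff_aeval_natDegree_mul_of_degree_le hn₀ hdeg, ← h, hsc, h,
      coeff_aeval_neg_natDegree_mul_of_degree_invert_le hn₀ hdeg_invert, hinv, one_div]
  have hA₀ : A.leadingCoeff ≠ 0 := leadingCoeff_ne_zero.2 (ne_zero_of_natDegree_gt hA)
  have hnorm : ‖c‖ = 1 := Complex.norm_eq_one_of_conj_mul_pow_eq hA₀ hcn (by omega) hextreme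
  refine ⟨Complex.conj_eq_iff_im.1 (Complex.conj_eq_of_conj_mul_pow_eq hnorm hextreme), hnorm, ?_⟩
  rw [hinv, norm_div, norm_one, hnorm, div_one]
end
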